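/- (Theorem 1.) For all i ≤ m and j ≤ n, the map sending an antidominant backtrace (i_1,j_1), ..., (i_k,j_k) for (i,j) to the list of characters [a_{i_1}, ..., a_{i_k}] is a bijection from the set of antidominant backtraces for (i,j) onto the set of distinct LCSs of A_i and B_j (where LCSs are counted as character strings, not embeddings). -/

import Mathlib

/-- `s` is a common subsequence of `A` and `B`. -/
def IsCommonSubseq {α : Type*} (A B s : List α) : Prop :=
  s.Sublist A ∧ s.Sublist B

/-- `lcsL A B i j` is the maximum length of a common subsequence of the
length-`i` prefix of `A` and the length-`j` prefix of `B`. -/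
noncomputable def lcsL {α : Type*} (A B : List α) (i j : ℕ) : ℕ :=
  sSup {k | ∃ s : List α, IsCommonSubseq (A.take i) (B.take j) s ∧ s.length = k}

/-- `s` is a longest common subsequence of the length-`i` prefix of `A` and
the length-`j` prefix of `B`. -/
def IsLCS {α : Type*} (A B : List α) (i j : ℕ) (s : List α) : Prop :=
  IsCommonSubseq (A.take i) (B.take j) s ∧ s.length = lcsL A B i j

/-- The (1-indexed) pair `(i, j)` is a match: `a_i = b_j`. -/
def IsMatch {α : Type*} (A B : List α) (i j : ℕ) : Prop :=
  1 ≤ i ∧ i ≤ A.length ∧ 1 ≤ j ∧ j ≤ B.length ∧ A[i - 1]? = B[j - 1]?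

/-- `e` is an embedding of the list `s` in the pair of prefixes `(A_i, B_j)`:
a sequence of (1-indexed) position pairs, strictly increasing in both
coordinates, lying in `[1..i] × [1..j]`, such that the `t`-th pair points at
occurrences of the `t`-th character of `s` in both strings. -/
def IsEmbedding {α : Type*} (A B : List α) (i j : ℕ) (s : List α)
    (e : List (ℕ × ℕ)) : Prop :=
  e.Chain' (fun u v => u.1 < v.1 ∧ u.2 < v.2) ∧
  (∀ u ∈ e, 1 ≤ u.1 ∧ u.1 ≤ i ∧ 1 ≤ u.2 ∧ u.2 ≤ j) ∧
  List.Forall₂ (fun (u : ℕ × ℕ) (c : α) =>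
    A[u.1 - 1]? = some c ∧ B[u.2 - 1]? = some c) e s

/-- The match `(i, j)` is antidominant of rank `r` within the rectangle
`[1..I] × [1..J]`. -/
def IsAntidominant {α : Type*} (A B : List α) (r I J i j : ℕ) : Prop :=
  IsMatch A B i j ∧ i ≤ I ∧ j ≤ J ∧ lcsL A B i j = r ∧
  ¬ ∃ i' j', IsMatch A B i' j' ∧ lcsL A B i' j' = r ∧
    ((i' = i ∧ j < j' ∧ j' ≤ J) ∨ (j' = j ∧ i < i' ∧ i' ≤ I))

/-- `e` is an antidominant backtrace for `(i, j)`: a sequence of matches of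
length `L(i,j)`, strictly increasing in both coordinates, such that (setting
the `(k+1)`-st entry to `(i+1, j+1)`) the `t`-th match is antidominant of rank
`t` within the rectangle determined by the `(t+1)`-st entry minus one. -/
def IsAntidominantBacktrace {α : Type*} (A B : List α) (i j : ℕ)
    (e : List (ℕ × ℕ)) : Prop :=
  e.length = lcsL A B i j ∧
  e.Chain' (fun u v => u.1 < v.1 ∧ u.2 < v.2) ∧
  ∀ t < e.length,
    IsAntidominant A B (t + 1)
      (((e ++ [(i + 1, j + 1)]).getD (t + 1) (0, 0)).1 - 1)
      (((e ++ [(i + 1, j + 1)]).getD (t + 1) (0, 0)).2 - 1)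
      (e.getD t (0, 0)).1 (e.getD t (0, 0)).2

/-!
Removing the last match `(p, q)` of an antidominant backtrace for `(i, j)` leaves an antidominant
backtrace for `(p - 1, q - 1)`, and conversely; together with `L(p, q) = L(p - 1, q - 1) + 1` at a
match, every claim follows by induction on the last entry. Reading off characters along a backtrace
thus spells a common subsequence of length `L(i, j)`. Conversely, the last character `c` of an LCS
`s ++ [c]` sits at a match of maximal rank `L(i, j)` just after an embedding of `s`, and pushing that
match to the last row, then the last column, holding a match of character `c` and rank `L(i, j)`
makes it antidominant. Uniqueness rests on the fact that two antidominant matches of rank `L(I, J)`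
in `[1..I] × [1..J]` with the same character coincide: otherwise one of them is followed in its row
or column by a match of the same character, whose rank is squeezed between theirs and `L(I, J)`.
-/

namespace List

variable {α : Type*}

theorem Sublist.dropLast {l₁ l₂ : List α} (h : l₁ <+ l₂) : l₁.dropLast <+ l₂.dropLast := by
  simpa using h.reverse.tail.reverse

theorem dropLast_take_sublist (l : List α) (n : ℕ) : (l.take n).dropLast <+ l.take (n - 1) := by
  rw [dropLast_eq_take, length_take, take_take]
  exact take_sublist_take_left (by omega)

theorem concat_sublist_take_add_one {l s : List α} {n : ℕ} {c : α} (hs : s <+ l.take n)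
    (hc : l[n]? = some c) : s ++ [c] <+ l.take (n + 1) := by
  rw [take_add_one, hc]
  exact hs.append (Sublist.refl _)

theorem exists_getElem?_eq_of_concat_sublist {l s : List α} {c : α} (h : s ++ [c] <+ l) :
    ∃ n, l[n]? = some c ∧ s <+ l.take n := by
  obtain ⟨r₁, r₂, rfl, hs, hc⟩ := append_sublist_iff.mp h
  obtain ⟨u, v, rfl⟩ := append_of_mem (singleton_sublist.mp hc)
  refine ⟨r₁.length + u.length, ?_, ?_⟩
  · simp
  · simpa [take_append, take_of_length_le] using hs.trans (sublist_append_left r₁ u)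

theorem exists_lt_getElem?_eq_of_concat_sublist_take {l s : List α} {c : α} {n : ℕ}
    (h : s ++ [c] <+ l.take n) : ∃ k < n, l[k]? = some c ∧ s <+ l.take k := by
  obtain ⟨k, hk, hs⟩ := exists_getElem?_eq_of_concat_sublist h
  rw [getElem?_take] at hk
  split_ifs at hk with hkn
  rw [take_take, min_eq_left hkn.le] at hs
  exact ⟨k, hkn, hk, hs⟩

theorem forall_lt_length_concat_getD_iff {P : ℕ → α → α → Prop} {e : List α} {u c d : α} :
    (∀ t < (e ++ [u]).length, P t ((e ++ [u] ++ [c]).getD (t + 1) d) ((e ++ [u]).getD t d)) ↔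
      (∀ t < e.length, P t ((e ++ [u]).getD (t + 1) d) (e.getD t d)) ∧ P e.length c u := by
  simp only [length_append, length_singleton, Nat.lt_succ_iff_lt_or_eq, or_imp, forall_and,
    forall_eq]
  refine and_congr (forall₂_congr fun t ht => ?_) ?_
  · rw [getD_append _ _ _ _ (by simpa using ht), getD_append _ _ _ _ ht]
  · rw [getD_append_right _ _ _ _ (by simp), getD_append_right _ _ _ _ le_rfl]
    simp

end List

open List

section lcsL

variable {α : Type*} (A B : List α)

theorem bddAbove_commonSubseq_lengths (i j : ℕ) :
    BddAbove {k | ∃ s : List α, IsCommonSubseq (A.take i) (B.take j) s ∧ s.length = k} :=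
  ⟨(A.take i).length, fun _ ⟨_, ⟨hA, _⟩, hk⟩ => hk ▸ hA.length_le⟩

theorem exists_isLCS (i j : ℕ) : ∃ s, IsLCS A B i j s := by
  obtain ⟨s, hs, hlen⟩ := Nat.sSup_mem (s := {k | ∃ s : List α,
    IsCommonSubseq (A.take i) (B.take j) s ∧ s.length = k})
    ⟨0, [], ⟨nil_sublist _, nil_sublist _⟩, rfl⟩ (bddAbove_commonSubseq_lengths A B i j)
  exact ⟨s, hs, hlen⟩

variable {A B}

theorem IsCommonSubseq.length_le_lcsL {i j : ℕ} {s : List α}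
    (h : IsCommonSubseq (A.take i) (B.take j) s) : s.length ≤ lcsL A B i j :=
  le_csSup (bddAbove_commonSubseq_lengths A B i j) ⟨s, h, rfl⟩

theorem lcsL_mono {i j i' j' : ℕ} (hi : i ≤ i') (hj : j ≤ j') :
    lcsL A B i j ≤ lcsL A B i' j' := by
  obtain ⟨s, ⟨hA, hB⟩, hs⟩ := exists_isLCS A B i j
  exact hs ▸ IsCommonSubseq.length_le_lcsL
    ⟨hA.trans (take_sublist_take_left hi), hB.trans (take_sublist_take_left hj)⟩

theorem lcsL_le_lcsL_sub_one_add_one (i j : ℕ) :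
    lcsL A B i j ≤ lcsL A B (i - 1) (j - 1) + 1 := by
  obtain ⟨s, ⟨hA, hB⟩, hs⟩ := exists_isLCS A B i j
  have := IsCommonSubseq.length_le_lcsL
    ⟨hA.dropLast.trans (dropLast_take_sublist A i), hB.dropLast.trans (dropLast_take_sublist B j)⟩
  rw [length_dropLast] at this
  omega

theorem IsMatch.exists_getElem?_eq {p q : ℕ} (h : IsMatch A B p q) :
    ∃ c, A[p - 1]? = some c ∧ B[q - 1]? = some c := by
  obtain ⟨hp, hpA, -, -, hAB⟩ := h
  have hc : A[p - 1]? = some (A[p - 1]'(by omega)) := getElem?_eq_getElem _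
  exact ⟨_, hc, hAB ▸ hc⟩

theorem IsMatch.sub_one_add_one {p q : ℕ} (h : IsMatch A B p q) :
    p - 1 + 1 = p ∧ q - 1 + 1 = q :=
  ⟨by have := h.1; omega, by have := h.2.2.1; omega⟩

theorem IsMatch.lcsL_eq {p q : ℕ} (h : IsMatch A B p q) :
    lcsL A B p q = lcsL A B (p - 1) (q - 1) + 1 := by
  obtain ⟨c, hA, hB⟩ := h.exists_getElem?_eq
  obtain ⟨s, ⟨hsA, hsB⟩, hs⟩ := exists_isLCS A B (p - 1) (q - 1)
  obtain ⟨hp, hq⟩ := h.sub_one_add_one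
  have hge := IsCommonSubseq.length_le_lcsL (i := p) (j := q)
    ⟨hp ▸ concat_sublist_take_add_one hsA hA, hq ▸ concat_sublist_take_add_one hsB hB⟩
  rw [length_append, length_singleton, hs] at hge
  exact le_antisymm (lcsL_le_lcsL_sub_one_add_one p q) hge

end lcsL

section antidominant

variable {α : Type*} {A B : List α}

theorem lcsL_eq_of_le_of_le {p q p' q' I J : ℕ} (hp : p ≤ p') (hq : q ≤ q') (hpI : p' ≤ I)
    (hqJ : q' ≤ J) (h : lcsL A B p q = lcsL A B I J) : lcsL A B p' q' = lcsL A B I J :=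
  le_antisymm (lcsL_mono hpI hqJ) (h ▸ lcsL_mono hp hq)

theorem IsMatch.cross {p₁ q₁ p₂ q₂ : ℕ} (h₁ : IsMatch A B p₁ q₁) (h₂ : IsMatch A B p₂ q₂)
    (hc : A[p₁ - 1]? = A[p₂ - 1]?) : IsMatch A B p₂ q₁ :=
  ⟨h₂.1, h₂.2.1, h₁.2.2.1, h₁.2.2.2.1, hc ▸ h₁.2.2.2.2⟩

theorem IsAntidominant.le_of_getElem?_eq {I J p₁ q₁ p₂ q₂ : ℕ}
    (h₁ : IsAntidominant A B (lcsL A B I J) I J p₁ q₁)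
    (h₂ : IsAntidominant A B (lcsL A B I J) I J p₂ q₂) (hc : A[p₁ - 1]? = A[p₂ - 1]?) :
    p₂ ≤ p₁ := by
  by_contra! hlt
  exact h₁.2.2.2.2 ⟨p₂, q₁, h₁.1.cross h₂.1 hc,
    lcsL_eq_of_le_of_le hlt.le le_rfl h₂.2.1 h₁.2.2.1 h₁.2.2.2.1, .inr ⟨rfl, hlt, h₂.2.1⟩⟩

theorem IsAntidominant.eq_of_getElem?_eq {I J p₁ q₁ p₂ q₂ : ℕ}
    (h₁ : IsAntidominant A B (lcsL A B I J) I J p₁ q₁)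
    (h₂ : IsAntidominant A B (lcsL A B I J) I J p₂ q₂) (hc : A[p₁ - 1]? = A[p₂ - 1]?) :
    (p₁, q₁) = (p₂, q₂) := by
  obtain rfl := le_antisymm (h₂.le_of_getElem?_eq h₁ hc.symm) (h₁.le_of_getElem?_eq h₂ hc)
  rcases lt_trichotomy q₁ q₂ with hlt | rfl | hlt
  · exact (h₁.2.2.2.2 ⟨p₁, q₂, h₂.1, h₂.2.2.2.1, .inl ⟨rfl, hlt, h₂.2.2.1⟩⟩).elim
  · rfl
  · exact (h₂.2.2.2.2 ⟨p₁, q₁, h₁.1, h₁.2.2.2.1, .inl ⟨rfl, hlt, h₁.2.2.1⟩⟩).elim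

theorem exists_isAntidominant_of_isMatch {I J p q : ℕ} (hm : IsMatch A B p q) (hpI : p ≤ I)
    (hqJ : q ≤ J) (hr : lcsL A B p q = lcsL A B I J) :
    ∃ p' q', IsAntidominant A B (lcsL A B I J) I J p' q' ∧ A[p' - 1]? = A[p - 1]? ∧
      p ≤ p' ∧ q ≤ q' := by
  classical
  let P : ℕ → Prop := fun p' =>
    ∃ q' ≤ J, IsMatch A B p' q' ∧ lcsL A B p' q' = lcsL A B I J ∧ A[p' - 1]? = A[p - 1]?
  have hP : P p := ⟨q, hqJ, hm, hr, rfl⟩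
  obtain ⟨q₀, hq₀J, hm₀, hr₀, hc₀⟩ := Nat.findGreatest_spec hpI hP
  set p' := Nat.findGreatest P I
  have hpp' : p ≤ p' := Nat.le_findGreatest hpI hP
  let Q : ℕ → Prop := fun q' => IsMatch A B p' q' ∧ lcsL A B p' q' = lcsL A B I J
  have hQ : Q q := ⟨hm.cross hm₀ hc₀.symm,
    lcsL_eq_of_le_of_le hpp' le_rfl (Nat.findGreatest_le I) hqJ hr⟩
  obtain ⟨hm', hr'⟩ := Nat.findGreatest_spec hqJ hQ
  refine ⟨p', Nat.findGreatest Q J,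
    ⟨hm', Nat.findGreatest_le I, Nat.findGreatest_le J, hr', ?_⟩, hc₀, hpp',
    Nat.le_findGreatest hqJ hQ⟩
  rintro ⟨i', j', hm'', hr'', ⟨rfl, hlt, hle⟩ | ⟨rfl, hlt, hle⟩⟩
  · exact hlt.not_ge (Nat.le_findGreatest hle ⟨hm'', hr''⟩)
  · exact hlt.not_ge (Nat.le_findGreatest hle
      ⟨_, Nat.findGreatest_le J, hm'', hr'', hm''.2.2.2.2.trans (hm'.2.2.2.2.symm.trans hc₀)⟩)

end antidominant

section backtrace

variable {α : Type*} {A B : List α}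

theorem isAntidominantBacktrace_nil_iff {i j : ℕ} :
    IsAntidominantBacktrace A B i j [] ↔ lcsL A B i j = 0 :=
  ⟨fun h => h.1.symm, fun h => ⟨h.symm, .nil, nofun⟩⟩

theorem IsAntidominantBacktrace.of_concat {i j : ℕ} {e : List (ℕ × ℕ)} {u : ℕ × ℕ}
    (h : IsAntidominantBacktrace A B i j (e ++ [u])) :
    IsAntidominantBacktrace A B (u.1 - 1) (u.2 - 1) e ∧
      IsAntidominant A B (lcsL A B i j) i j u.1 u.2 := by
  obtain ⟨hlen, hchain, hall⟩ := h
  obtain ⟨hall, hu⟩ := (forall_lt_length_concat_getD_iff (P := fun t (v w : ℕ × ℕ) =>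
    IsAntidominant A B (t + 1) (v.1 - 1) (v.2 - 1) w.1 w.2)).mp hall
  simp only [length_append, length_singleton, Nat.add_sub_cancel] at hlen hu
  rw [hlen] at hu
  -- `u` is the sentinel closing the shorter backtrace `e` for `(u.1 - 1, u.2 - 1)`.
  have hu' : (u.1 - 1 + 1, u.2 - 1 + 1) = u := by
    obtain ⟨hp, hq⟩ := hu.1.sub_one_add_one
    rw [hp, hq]
  refine ⟨⟨?_, (isChain_append.mp hchain).1, hu' ▸ hall⟩, hu⟩
  have := hu.1.lcsL_eq
  have := hu.2.2.2.1
  omega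

theorem IsAntidominantBacktrace.concat {i j : ℕ} {e : List (ℕ × ℕ)} {u : ℕ × ℕ}
    (he : IsAntidominantBacktrace A B (u.1 - 1) (u.2 - 1) e)
    (hu : IsAntidominant A B (lcsL A B i j) i j u.1 u.2) :
    IsAntidominantBacktrace A B i j (e ++ [u]) := by
  obtain ⟨hp, hq⟩ := hu.1.sub_one_add_one
  have hlast : ∀ v ∈ e.getLast?, v.1 < u.1 ∧ v.2 < u.2 := by
    obtain rfl | ⟨e, v, rfl⟩ := eq_nil_or_concat' e
    · simp
    · obtain ⟨-, hv⟩ := he.of_concat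
      simp only [getLast?_concat, Option.mem_some_iff, forall_eq']
      have := hv.2.1; have := hv.2.2.1
      omega
  have hu' : (u.1 - 1 + 1, u.2 - 1 + 1) = u := by rw [hp, hq]
  obtain ⟨hlen, hchain, hall⟩ := he
  have hrank : lcsL A B (u.1 - 1) (u.2 - 1) + 1 = lcsL A B i j := hu.1.lcsL_eq ▸ hu.2.2.2.1
  refine ⟨by simp [hlen, hrank], hchain.append (isChain_singleton u) (by simpa using hlast),
    (forall_lt_length_concat_getD_iff (P := fun t (v w : ℕ × ℕ) =>
      IsAntidominant A B (t + 1) (v.1 - 1) (v.2 - 1) w.1 w.2)).mpr ⟨hu' ▸ hall, ?_⟩⟩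
  simpa [hlen, hrank] using hu

theorem IsAntidominantBacktrace.exists_isLCS {i j : ℕ} {e : List (ℕ × ℕ)}
    (he : IsAntidominantBacktrace A B i j e) :
    ∃ s, IsLCS A B i j s ∧ e.map (fun u => A[u.1 - 1]?) = s.map some := by
  induction e using List.reverseRecOn generalizing i j with
  | nil =>
    exact ⟨[], ⟨⟨nil_sublist _, nil_sublist _⟩, (isAntidominantBacktrace_nil_iff.mp he).symm⟩, rfl⟩
  | append_singleton e u ih =>
    obtain ⟨he, hu⟩ := he.of_concat
    obtain ⟨s, ⟨⟨hsA, hsB⟩, hs⟩, hmap⟩ := ih he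
    obtain ⟨c, hA, hB⟩ := hu.1.exists_getElem?_eq
    obtain ⟨hp, hq⟩ := hu.1.sub_one_add_one
    refine ⟨s ++ [c], ⟨⟨?_, ?_⟩, ?_⟩, by simp [hmap, hA]⟩
    · exact (hp ▸ concat_sublist_take_add_one hsA hA).trans (take_sublist_take_left hu.2.1)
    · exact (hq ▸ concat_sublist_take_add_one hsB hB).trans (take_sublist_take_left hu.2.2.1)
    · simp [hs, ← hu.1.lcsL_eq, hu.2.2.2.1]

theorem IsLCS.exists_isAntidominantBacktrace {i j : ℕ} {s : List α} (hs : IsLCS A B i j s) :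
    ∃ e, IsAntidominantBacktrace A B i j e ∧ e.map (fun u => A[u.1 - 1]?) = s.map some := by
  induction s using List.reverseRecOn generalizing i j with
  | nil => exact ⟨[], isAntidominantBacktrace_nil_iff.mpr hs.2.symm, rfl⟩
  | append_singleton s c ih =>
    obtain ⟨⟨hsA, hsB⟩, hlen⟩ := hs
    obtain ⟨p, hpi, hpc, hsp⟩ := exists_lt_getElem?_eq_of_concat_sublist_take hsA
    obtain ⟨q, hqj, hqc, hsq⟩ := exists_lt_getElem?_eq_of_concat_sublist_take hsB
    have hm : IsMatch A B (p + 1) (q + 1) :=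
      ⟨le_add_self, (List.getElem?_eq_some_iff.mp hpc).1, le_add_self,
        (List.getElem?_eq_some_iff.mp hqc).1, by simp [hpc, hqc]⟩
    have hr : lcsL A B (p + 1) (q + 1) = lcsL A B i j := by
      have h₁ := IsCommonSubseq.length_le_lcsL ⟨hsp, hsq⟩
      have h₂ : lcsL A B (p + 1) (q + 1) = lcsL A B p q + 1 := hm.lcsL_eq
      have h₃ := lcsL_mono (A := A) (B := B) (i := p + 1) (j := q + 1) hpi hqj
      simp only [length_append, length_singleton] at hlen
      omega
    obtain ⟨p', q', hu, hc, hpp', hqq'⟩ := exists_isAntidominant_of_isMatch hm hpi hqj hr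
    have hs' : IsLCS A B (p' - 1) (q' - 1) s := by
      refine ⟨⟨hsp.trans (take_sublist_take_left (by omega)),
        hsq.trans (take_sublist_take_left (by omega))⟩, ?_⟩
      have := hu.1.lcsL_eq
      have := hu.2.2.2.1
      simp only [length_append, length_singleton] at hlen
      omega
    obtain ⟨e, he, hmap⟩ := ih hs'
    exact ⟨e ++ [(p', q')], he.concat hu, by simp [hmap, hc, hpc]⟩

theorem IsAntidominantBacktrace.eq_of_map_eq {i j : ℕ} {e₁ e₂ : List (ℕ × ℕ)}
    (h₁ : IsAntidominantBacktrace A B i j e₁) (h₂ : IsAntidominantBacktrace A B i j e₂)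
    (h : e₁.map (fun u => A[u.1 - 1]?) = e₂.map (fun u => A[u.1 - 1]?)) : e₁ = e₂ := by
  induction e₁ using List.reverseRecOn generalizing i j e₂ with
  | nil => exact (map_eq_nil_iff.mp h.symm).symm
  | append_singleton e₁ u₁ ih =>
    obtain rfl | ⟨e₂, u₂, rfl⟩ := eq_nil_or_concat' e₂
    · simp at h
    obtain ⟨h₁, hu₁⟩ := h₁.of_concat
    obtain ⟨h₂, hu₂⟩ := h₂.of_concat
    simp only [map_append, map_singleton] at h
    obtain ⟨hmap, hc⟩ := append_inj' h rfl
    obtain rfl : u₁ = u₂ := hu₁.eq_of_getElem?_eq hu₂ (by simpa using hc)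
    rw [ih h₁ h₂ hmap]

end backtrace

theorem stmt_14_general {α : Type*} (A B : List α) (i j : ℕ) :
    (∀ e : List (ℕ × ℕ), IsAntidominantBacktrace A B i j e →
      ∃ s : List α, IsLCS A B i j s ∧
        e.map (fun u => A[u.1 - 1]?) = s.map some) ∧
    (∀ s : List α, IsLCS A B i j s →
      ∃! e : List (ℕ × ℕ), IsAntidominantBacktrace A B i j e ∧
        e.map (fun u => A[u.1 - 1]?) = s.map some) := by
  refine ⟨fun e he => he.exists_isLCS, fun s hs => ?_⟩
  obtain ⟨e, he, hmap⟩ := hs.exists_isAntidominantBacktrace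
  exact ⟨e, ⟨he, hmap⟩, fun e' ⟨he', hmap'⟩ => he'.eq_of_map_eq he (hmap'.trans hmap.symm)⟩

theorem stmt_14 {α : Type*} [DecidableEq α] (A B : List α) (m n : ℕ)
    (hA : A.length = m) (hB : B.length = n) (i j : ℕ)
    (him : i ≤ m) (hjn : j ≤ n) :
    (∀ e : List (ℕ × ℕ), IsAntidominantBacktrace A B i j e →
      ∃ s : List α, IsLCS A B i j s ∧
        e.map (fun u => A[u.1 - 1]?) = s.map some) ∧
    (∀ s : List α, IsLCS A B i j s →
      ∃! e : List (ℕ × ℕ), IsAntidominantBacktrace A B i j e ∧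
        e.map (fun u => A[u.1 - 1]?) = s.map some) :=
  stmt_14_general A B i j
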